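/- Av(Always-1; N, M) ≤ M · Av(Deterministic; N, M), locally at each vertex: fix M ≥ 1 and a configuration c : ℤ×ℤ → ℤ with nonnegative values. If S is a legal stabilising toppling sequence for amount M and threshold 4M from c, and T is a legal stabilising toppling sequence for amount 1 and threshold 4M from c, then for every vertex v, the occurrence count of v in T is at most M times the occurrence count of v in S; in particular the length of T is at most M times the length of S. -/

import Mathlib

/-- Configurations: finitely supported functions on `ℤ × ℤ` with integer values. -/
abbrev Config := (ℤ × ℤ) →₀ ℤ

/-- The four neighbours of a vertex `v = (x, y)` in `ℤ × ℤ`. -/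
def nbrs (v : ℤ × ℤ) : Finset (ℤ × ℤ) :=
  {(v.1 + 1, v.2), (v.1 - 1, v.2), (v.1, v.2 + 1), (v.1, v.2 - 1)}

/-- The amount-`k` toppling at `v`: `c − 4k·𝟙_v + k·Σ_{w∼v} 𝟙_w`. -/
noncomputable def topp (k : ℤ) (v : ℤ × ℤ) (c : Config) : Config :=
  c - Finsupp.single v (4 * k) + ∑ w ∈ nbrs v, Finsupp.single w k


/-- Applying the amount-`k` topplings along a list `S = (v₁, …, vₙ)`:
`Topp_k(vₙ) ∘ ⋯ ∘ Topp_k(v₁)`. -/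
noncomputable def toppList (k : ℤ) (S : List (ℤ × ℤ)) (c : Config) : Config :=
  S.foldl (fun c v => topp k v c) c

/-- `S` is a legal toppling sequence (amount `k`, threshold `T`) from `c`:
each toppled vertex is unstable at the time it topples. -/
def legal (k T : ℤ) : List (ℤ × ℤ) → Config → Prop
  | [], _ => True
  | v :: S, c => T ≤ c v ∧ legal k T S (topp k v c)

/-- `c` is stable for threshold `T`: every vertex has value `< T`. -/
def stable (T : ℤ) (c : Config) : Prop := ∀ v, c v < T

/-! The argument is a least action principle. Writing `Δ` for the lattice Laplacian, the amount-`k`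
topplings along `S` turn `c` into `c + k Δ(count S)`. If `c + k Δu` is stable for some `u ≥ 0`, a legal
amount-`k` sequence topples each vertex `v` at most `u v` times: its first vertex `x` is unstable in `c`,
which forces `u x ≥ 1`, and passing to `Topp_k(x) c` and `u - 𝟙_x` leaves `c + k Δu` unchanged.
For `T` take `k = 1` and `u = M · count S`, for which `c + Δu` is the stabilisation of `c` by `S`. -/

def laplacian : (ℤ × ℤ → ℤ) →ₗ[ℤ] (ℤ × ℤ → ℤ) where
  toFun u v := ∑ w ∈ nbrs v, u w - 4 * u v
  map_add' u u' := by ext v; simp only [Pi.add_apply, Finset.sum_add_distrib]; ring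
  map_smul' k u := by
    ext v; simp only [Pi.smul_apply, smul_eq_mul, ← Finset.mul_sum, RingHom.id_apply]; ring

lemma laplacian_apply (u : ℤ × ℤ → ℤ) (v : ℤ × ℤ) :
    laplacian u v = ∑ w ∈ nbrs v, u w - 4 * u v :=
  rfl

lemma mem_nbrs_comm {v w : ℤ × ℤ} : v ∈ nbrs w ↔ w ∈ nbrs v := by
  simp only [nbrs, Finset.mem_insert, Finset.mem_singleton, Prod.ext_iff]
  omega

lemma topp_apply (k : ℤ) (x : ℤ × ℤ) (c : Config) (v : ℤ × ℤ) :
    topp k x c v = c v + k * laplacian (Pi.single x 1) v := by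
  simp only [topp, laplacian_apply, Finsupp.coe_add, Finsupp.coe_sub, Finsupp.coe_finsetSum,
    Pi.add_apply, Pi.sub_apply, Finset.sum_apply, Finsupp.single_apply, Pi.single_apply,
    Finset.sum_ite_eq', mem_nbrs_comm (v := x)]
  split_ifs <;> simp_all [eq_comm] <;> ring

lemma count_cons_eq_add_single (x : ℤ × ℤ) (S : List (ℤ × ℤ)) :
    (fun v => ((x :: S).count v : ℤ)) = (fun v => (S.count v : ℤ)) + Pi.single x 1 := by
  ext v
  by_cases h : v = x <;> simp [h, Ne.symm]

lemma toppList_apply (k : ℤ) (S : List (ℤ × ℤ)) (c : Config) (v : ℤ × ℤ) :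
    toppList k S c v = c v + k * laplacian (fun w => (S.count w : ℤ)) v := by
  induction S generalizing c with
  | nil => simp [toppList, laplacian_apply]
  | cons x S ih =>
    rw [toppList, List.foldl_cons, ← toppList, ih, topp_apply, count_cons_eq_add_single,
      map_add, Pi.add_apply]
    ring

theorem count_le_of_legal_of_stable_add_laplacian {k Θ : ℤ} (hk : 0 ≤ k) {T : List (ℤ × ℤ)}
    {c : Config} {u : ℤ × ℤ → ℤ} (hT : legal k Θ T c) (hu : 0 ≤ u)
    (hstab : ∀ v, c v + k * laplacian u v < Θ) (v : ℤ × ℤ) : T.count v ≤ u v := by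
  induction T generalizing c u with
  | nil => simpa using hu v
  | cons x T ih =>
    obtain ⟨hx, hT⟩ := hT
    have hux : 1 ≤ u x := by
      by_contra! h
      have hux0 : u x = 0 := le_antisymm (Int.lt_add_one_iff.mp h) (hu x)
      have hnbrs : 0 ≤ k * ∑ w ∈ nbrs x, u w := mul_nonneg hk (Finset.sum_nonneg fun w _ => hu w)
      have := hstab x
      rw [laplacian_apply, hux0] at this
      linarith
    have hu' : 0 ≤ u - Pi.single x 1 := by
      intro w
      by_cases h : w = x
      · simpa [h] using hux
      · simpa [h] using hu w
    have hstab' : ∀ w, topp k x c w + k * laplacian (u - Pi.single x 1) w < Θ := by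
      intro w
      simpa [topp_apply, map_sub, mul_sub] using hstab w
    calc ((x :: T).count v : ℤ) = T.count v + (Pi.single x 1 : ℤ × ℤ → ℤ) v :=
          congrFun (count_cons_eq_add_single x T) v
      _ ≤ (u - Pi.single x 1 : ℤ × ℤ → ℤ) v + (Pi.single x 1 : ℤ × ℤ → ℤ) v := by
          gcongr; exact ih hT hu' hstab'
      _ = u v := by simp

lemma List.length_le_mul_of_count_le {α : Type*} [BEq α] [LawfulBEq α] {S T : List α} {n : ℕ}
    (h : ∀ a, T.count a ≤ n * S.count a) : T.length ≤ n * S.length := by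
  classical
  have hle : (T : Multiset α) ≤ n • (S : Multiset α) := Multiset.le_iff_count.2 fun a => by
    rw [Multiset.count_nsmul, Multiset.coe_count, Multiset.coe_count]
    convert h a
  simpa using Multiset.card_le_card hle

theorem always1_le_deterministic_general (M : ℕ) (c : Config) (S T : List (ℤ × ℤ))
    (hSstab : stable (4 * M) (toppList (M : ℤ) S c))
    (hT : legal 1 (4 * M) T c) :
    (∀ v : ℤ × ℤ, T.count v ≤ M * S.count v) ∧ T.length ≤ M * S.length := by
  have hcount : ∀ v, T.count v ≤ M * S.count v := fun v => by
    have hstab : ∀ w, c w + 1 * laplacian ((M : ℤ) • fun w => (S.count w : ℤ)) w < 4 * M :=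
      fun w => by
        simpa only [map_smul, Pi.smul_apply, smul_eq_mul, one_mul, toppList_apply] using hSstab w
    have hu : 0 ≤ (M : ℤ) • fun w => (S.count w : ℤ) :=
      smul_nonneg M.cast_nonneg fun w => (S.count w).cast_nonneg
    have := count_le_of_legal_of_stable_add_laplacian zero_le_one hT hu hstab v
    simp only [Pi.smul_apply, smul_eq_mul] at this
    exact_mod_cast this
  exact ⟨hcount, List.length_le_mul_of_count_le hcount⟩

/-- `Av(Always-1; N, M) ≤ M · Av(Deterministic; N, M)`, locally at each vertex:
if `S` is a legal stabilising sequence for amount `M`, threshold `4M` from a nonnegative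
configuration `c`, and `T` is a legal stabilising sequence for amount `1`, threshold `4M`
from `c`, then each vertex occurs in `T` at most `M` times as often as in `S`; in
particular the length of `T` is at most `M` times the length of `S`. -/
theorem always1_le_deterministic (M : ℕ) (hM : 1 ≤ M) (c : Config)
    (hc : ∀ v, 0 ≤ c v) (S T : List (ℤ × ℤ))
    (hS : legal (M : ℤ) (4 * M) S c) (hSstab : stable (4 * M) (toppList (M : ℤ) S c))
    (hT : legal 1 (4 * M) T c) (hTstab : stable (4 * M) (toppList 1 T c)) :
    (∀ v : ℤ × ℤ, T.count v ≤ M * S.count v) ∧ T.length ≤ M * S.length :=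
  always1_le_deterministic_general M c S T hSstab hT
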